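/- arXiv:2412.00512 — 5 statements merged into one kernel-verified Lean document; each statement's English description precedes it below -/
import Mathlib

section
/- Let H be a real Hilbert space and let A, B ⊆ H be nonempty closed convex sets with A ∩ B ≠ ∅. Then a point x ∈ H is a circumcenter of itself with respect to (A, B) (i.e. x lies in the affine span of {x, R_A(x), R_B(R_A(x))} and ‖x − x‖ = ‖x − R_A(x)‖ = ‖x − R_B(R_A(x))‖) if and only if x ∈ A ∩ B. In other words, the fixed-point set of the circumcentered-reflection operator C_T equals A ∩ B. -/
open RealInnerProductSpace Pointwise

/-- `p` is the metric projection of `x` onto `C`: the point of `C` such that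
`⟪y - p, x - p⟫ ≤ 0` for all `y ∈ C`. -/
def IsProj {E : Type*} [NormedAddCommGroup E] [InnerProductSpace ℝ E]
    (C : Set E) (x p : E) : Prop :=
  p ∈ C ∧ ∀ y ∈ C, ⟪y - p, x - p⟫ ≤ 0

/-- `c` is a circumcenter of `x` with respect to `(A, B)`: writing `R_A x = 2 P_A x - x`
and `R_B (R_A x) = 2 P_B (R_A x) - R_A x`, the point `c` lies in the affine span of
`{x, R_A x, R_B (R_A x)}` and is equidistant from these three points. -/
def IsCircumcenter {E : Type*} [NormedAddCommGroup E] [InnerProductSpace ℝ E]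
    (A B : Set E) (x c : E) : Prop :=
  ∃ pa pb : E, IsProj A x pa ∧ IsProj B ((2 : ℝ) • pa - x) pb ∧
    c ∈ affineSpan ℝ
      ({x, (2 : ℝ) • pa - x, (2 : ℝ) • pb - ((2 : ℝ) • pa - x)} : Set E) ∧
    ‖c - x‖ = ‖c - ((2 : ℝ) • pa - x)‖ ∧
    ‖c - x‖ = ‖c - ((2 : ℝ) • pb - ((2 : ℝ) • pa - x))‖

/-- For nonempty closed convex sets `A, B` in a real Hilbert space with
`A ∩ B ≠ ∅`, a point `x` is a circumcenter of itself with respect to `(A, B)` if and only if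
`x ∈ A ∩ B`; i.e. the fixed-point set of the circumcentered-reflection operator is `A ∩ B`. -/
theorem crm_fixed_point_set
    {H : Type*} [NormedAddCommGroup H] [InnerProductSpace ℝ H] [CompleteSpace H]
    (A B : Set H) (hAne : A.Nonempty) (hAcl : IsClosed A) (hAcv : Convex ℝ A)
    (hBne : B.Nonempty) (hBcl : IsClosed B) (hBcv : Convex ℝ B)
    (hABne : (A ∩ B).Nonempty) (x : H) :
    IsCircumcenter A B x x ↔ x ∈ A ∩ B := by
  constructor
  · rintro ⟨pa, pb, ⟨hpaA, -⟩, ⟨hpbB, -⟩, -, h1, h2⟩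
    have hx : ‖x - x‖ = 0 := by simp
    have hpa : pa = x := by
      have h' := sub_eq_zero.mp (norm_eq_zero.mp (h1 ▸ hx))
      linear_combination (norm := module) (-(2:ℝ)⁻¹) • h'
    have hpb : pb = x := by
      have h' := sub_eq_zero.mp (norm_eq_zero.mp (h2 ▸ hx))
      rw [hpa] at h'
      linear_combination (norm := module) (-(2:ℝ)⁻¹) • h'
    exact ⟨hpa ▸ hpaA, hpb ▸ hpbB⟩
  · rintro ⟨hxA, hxB⟩
    have hxx : (2:ℝ) • x - x = x := by rw [two_smul]; abel
    refine ⟨x, x, ⟨hxA, fun y hy => by simp⟩, ⟨hxB, fun y hy => by rw [hxx]; simp⟩,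
      ?_, by rw [hxx], by rw [hxx, hxx]⟩
    exact subset_affineSpan ℝ _ (by simp)
end

section
/- Let A, B ⊆ ℝ² be nonempty closed convex cones. Then for every initial point x ∈ ℝ², the circumcentered-reflection method finds a feasible point in A ∩ B in at most three steps: there exist points x₀ = x, x₁, x₂, x₃ in ℝ² such that for each k ∈ {0, 1, 2} the point x_{k+1} is a circumcenter of x_k with respect to (A, B), and x_k ∈ A ∩ B for some k ≤ 3. -/
open RealInnerProductSpace Pointwise

section Aux

variable {E : Type*} [NormedAddCommGroup E] [InnerProductSpace ℝ E]

lemma isProj_self {C : Set E} {y : E} (hy : y ∈ C) : IsProj C y y :=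
  ⟨hy, fun z _ => by simp⟩

lemma exists_isProj {C : Set E} [CompleteSpace E] (hne : C.Nonempty) (hcl : IsClosed C)
    (hcv : Convex ℝ C) (x : E) : ∃ p, IsProj C x p := by
  obtain ⟨p, hp, hmin⟩ := exists_norm_eq_iInf_of_complete_convex hne hcl.isComplete hcv x
  refine ⟨p, hp, fun y hy => ?_⟩
  have := (norm_eq_iInf_iff_real_inner_le_zero hcv hp).1 hmin y hy
  rwa [real_inner_comm] at this

lemma isProj_cone_inner {C : Set E} {x p : E}
    (hcone : ∀ l : ℝ, 0 ≤ l → ∀ y ∈ C, l • y ∈ C) (h : IsProj C x p) :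
    ⟪p, x - p⟫ = 0 := by
  have h2 := h.2 ((2 : ℝ) • p) (hcone 2 (by norm_num) p h.1)
  have h12 := h.2 ((1/2 : ℝ) • p) (hcone (1/2) (by norm_num) p h.1)
  have e2 : (2 : ℝ) • p - p = p := by module
  have e12 : (1/2 : ℝ) • p - p = -((1/2 : ℝ) • p) := by module
  rw [e2] at h2
  rw [e12, inner_neg_left, real_inner_smul_left] at h12
  linarith

/-- The reflection with respect to a closed convex cone preserves the norm
(a consequence of the Moreau decomposition). -/
lemma refl_norm_cone {C : Set E} {x p : E}
    (hcone : ∀ l : ℝ, 0 ≤ l → ∀ y ∈ C, l • y ∈ C) (h : IsProj C x p) :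
    ‖(2 : ℝ) • p - x‖ = ‖x‖ := by
  have hi : ⟪p, x - p⟫ = 0 := isProj_cone_inner hcone h
  have hpx : ⟪p, x⟫ = ⟪p, p⟫ := by rw [inner_sub_right] at hi; linarith
  have hsq : ‖(2 : ℝ) • p - x‖ ^ 2 = ‖x‖ ^ 2 := by
    rw [← real_inner_self_eq_norm_sq, ← real_inner_self_eq_norm_sq]
    simp only [inner_sub_left, inner_sub_right, real_inner_smul_left, real_inner_smul_right,
      real_inner_comm p x, hpx]
    ring
  nlinarith [norm_nonneg ((2 : ℝ) • p - x), norm_nonneg x]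

/-- Three collinear points on a sphere centred at the origin cannot be pairwise distinct. -/
lemma collinear_sphere {a b c : E} (hcol : Collinear ℝ ({a, b, c} : Set E))
    (hab : ‖b‖ = ‖a‖) (hac : ‖c‖ = ‖a‖) (h1 : b ≠ a) (h2 : c ≠ a) : b = c := by
  obtain ⟨v, hv⟩ := (collinear_iff_of_mem (show a ∈ ({a, b, c} : Set E) by simp)).1 hcol
  obtain ⟨r, hr⟩ := hv b (by simp)
  obtain ⟨s, hs⟩ := hv c (by simp)
  rw [vadd_eq_add] at hr hs
  have hr0 : r ≠ 0 := by rintro rfl; simp at hr; exact h1 hr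
  have hs0 : s ≠ 0 := by rintro rfl; simp at hs; exact h2 hs
  have hv0 : ⟪v, v⟫ ≠ 0 := by
    intro h
    have : v = 0 := by rwa [inner_self_eq_zero] at h
    subst this; simp at hr; exact h1 hr
  have key : ∀ t : ℝ, ‖t • v + a‖ = ‖a‖ → t ≠ 0 → t * ⟪v, v⟫ + 2 * ⟪v, a⟫ = 0 := by
    intro t ht ht0
    have hsq : ‖t • v + a‖ ^ 2 = ‖a‖ ^ 2 := by rw [ht]
    rw [← real_inner_self_eq_norm_sq, ← real_inner_self_eq_norm_sq] at hsq
    simp only [inner_add_left, inner_add_right, real_inner_smul_left, real_inner_smul_right,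
      real_inner_comm v a] at hsq
    have : t * (t * ⟪v, v⟫ + 2 * ⟪v, a⟫) = 0 := by linarith
    rcases mul_eq_zero.1 this with h | h
    · exact absurd h ht0
    · exact h
  have kr := key r (by rw [← hr, hab]) hr0
  have ks := key s (by rw [← hs, hac]) hs0
  have hrs : r = s := by
    have : (r - s) * ⟪v, v⟫ = 0 := by linarith
    rcases mul_eq_zero.1 this with h | h
    · linarith
    · exact absurd h hv0
  rw [hr, hs, hrs]

/-- If a point is in `A ∩ B`, it is its own circumcenter. -/
lemma isCircumcenter_self {A B : Set E} {y : E}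
    (hA : y ∈ A) (hB : y ∈ B) : IsCircumcenter A B y y := by
  have e : (2 : ℝ) • y - y = y := by module
  refine ⟨y, y, isProj_self hA, by rw [e]; exact isProj_self hB, ?_, by rw [e], by rw [e, e]⟩
  exact subset_affineSpan ℝ _ (by simp)

lemma midpoint_mem_span {s : Set E} {u w p : E}
    (hu : u ∈ affineSpan ℝ s) (hw : w ∈ affineSpan ℝ s)
    (h : w = (2 : ℝ) • p - u) : p ∈ affineSpan ℝ s := by
  have hm := AffineSubspace.smul_vsub_vadd_mem (affineSpan ℝ s) (1/2 : ℝ) hw hu hu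
  have e : (1/2 : ℝ) • (w -ᵥ u) +ᵥ u = p := by
    rw [vsub_eq_sub, vadd_eq_add, h]; module
  rwa [e] at hm

end Aux

/-- Three non-collinear points in the plane affinely span the whole plane. -/
lemma span_top_of_not_collinear {a b c : EuclideanSpace ℝ (Fin 2)}
    (h : ¬ Collinear ℝ ({a, b, c} : Set (EuclideanSpace ℝ (Fin 2)))) :
    affineSpan ℝ ({a, b, c} : Set (EuclideanSpace ℝ (Fin 2))) = ⊤ := by
  rw [AffineSubspace.affineSpan_eq_top_iff_vectorSpan_eq_top_of_nonempty ℝ _ _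
    (by simp : ({a, b, c} : Set _).Nonempty)]
  rw [collinear_iff_rank_le_one] at h
  have hrank : 1 < Module.rank ℝ (vectorSpan ℝ ({a, b, c} : Set (EuclideanSpace ℝ (Fin 2)))) :=
    lt_of_not_ge h
  have hfr : 1 < Module.finrank ℝ (vectorSpan ℝ ({a, b, c} : Set (EuclideanSpace ℝ (Fin 2)))) := by
    have := Module.finrank_eq_rank ℝ (vectorSpan ℝ ({a, b, c} : Set (EuclideanSpace ℝ (Fin 2))))
    rw [← this] at hrank
    exact_mod_cast hrank
  have hle := Submodule.finrank_le (vectorSpan ℝ ({a, b, c} : Set (EuclideanSpace ℝ (Fin 2))))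
  have hE : Module.finrank ℝ (EuclideanSpace ℝ (Fin 2)) = 2 := by simp
  apply Submodule.eq_top_of_finrank_eq
  omega

/-- One step of the circumcentered-reflection method: from any point we can reach a
circumcenter that is in `A ∩ B`, or is in `B` (when we started in `A`), or is in `A`
and is the midpoint of the starting point and a point of `B`. -/
lemma crm_step {A B : Set (EuclideanSpace ℝ (Fin 2))}
    (hAcl : IsClosed A) (hAcv : Convex ℝ A)
    (hAcone : ∀ l : ℝ, 0 ≤ l → ∀ y ∈ A, l • y ∈ A)
    (hBne : B.Nonempty) (hBcl : IsClosed B) (hBcv : Convex ℝ B)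
    (hBcone : ∀ l : ℝ, 0 ≤ l → ∀ y ∈ B, l • y ∈ B)
    (hA0 : (0 : EuclideanSpace ℝ (Fin 2)) ∈ A)
    (hB0 : (0 : EuclideanSpace ℝ (Fin 2)) ∈ B)
    (x : EuclideanSpace ℝ (Fin 2)) :
    ∃ c, IsCircumcenter A B x c ∧
      (c ∈ A ∩ B ∨ (x ∈ A ∧ c ∈ B) ∨
        (x ∉ A ∧ c ∈ A ∧ ∃ b ∈ B, c = (1/2 : ℝ) • x + (1/2 : ℝ) • b)) := by
  by_cases hxA : x ∈ A
  · -- pa = x, ra = x; the circumcenter is pb, the projection of x onto B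
    have e : (2 : ℝ) • x - x = x := by module
    obtain ⟨pb, hpb⟩ := exists_isProj hBne hBcl hBcv x
    refine ⟨pb, ⟨x, pb, isProj_self hxA, by rw [e]; exact hpb, ?_, ?_, ?_⟩, ?_⟩
    · rw [e]
      refine midpoint_mem_span (subset_affineSpan ℝ _ (by simp))
        (subset_affineSpan ℝ _ (show (2:ℝ) • pb - x ∈ _ by simp)) rfl
    · rw [e]
    · rw [e]
      have h : pb - ((2 : ℝ) • pb - x) = -(pb - x) := by module
      rw [h, norm_neg]
    · exact Or.inr (Or.inl ⟨hxA, hpb.1⟩)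
  · obtain ⟨pa, hpa⟩ := exists_isProj ⟨0, hA0⟩ hAcl hAcv x
    set ra := (2 : ℝ) • pa - x with hra
    obtain ⟨pb, hpb⟩ := exists_isProj hBne hBcl hBcv ra
    set rb := (2 : ℝ) • pb - ra with hrb
    have hnra : ‖ra‖ = ‖x‖ := refl_norm_cone hAcone hpa
    have hnrb : ‖rb‖ = ‖x‖ := by rw [hrb, refl_norm_cone hBcone hpb, hnra]
    have hrax : ra ≠ x := by
      intro h
      apply hxA
      have h2 : (2:ℝ) • pa = (2:ℝ) • x := by
        rw [hra, sub_eq_iff_eq_add] at h; rw [h]; module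
      have hpax := smul_right_injective (EuclideanSpace ℝ (Fin 2)) (two_ne_zero (α := ℝ)) h2
      exact hpax ▸ hpa.1
    have hmid : ‖pa - x‖ = ‖pa - ra‖ := by
      have h : pa - ra = -(pa - x) := by rw [hra]; module
      rw [h, norm_neg]
    have hspan : pa ∈ affineSpan ℝ ({x, ra, rb} : Set (EuclideanSpace ℝ (Fin 2))) :=
      midpoint_mem_span (subset_affineSpan ℝ _ (by simp))
        (subset_affineSpan ℝ _ (by simp : ra ∈ _)) hra
    have hpamid : pa = (1/2 : ℝ) • x + (1/2 : ℝ) • ra := by rw [hra]; module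
    by_cases h1 : rb = ra
    · -- second reflection fixes ra, so ra ∈ B and the circumcenter is pa
      have hpbra : pb = ra := by
        have h2 : (2:ℝ) • pb = (2:ℝ) • ra := by
          have h3 : (2:ℝ) • pb - ra = ra := by rw [← hrb]; exact h1
          rw [sub_eq_iff_eq_add] at h3; rw [h3]; module
        exact smul_right_injective (EuclideanSpace ℝ (Fin 2)) (two_ne_zero (α := ℝ)) h2
      refine ⟨pa, ⟨pa, pb, hpa, hpb, hspan, hmid, ?_⟩, ?_⟩
      · rw [← hra, ← hrb, h1]; exact hmid
      · exact Or.inr (Or.inr ⟨hxA, hpa.1, ra, hpbra ▸ hpb.1, hpamid⟩)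
    · by_cases h2 : rb = x
      · -- the circumcenter is pa = pb ∈ A ∩ B
        have hpapb : pa = pb := by
          have h3 : (2:ℝ) • pa = (2:ℝ) • pb := by
            have h4 : (2:ℝ) • pb - ra = x := by rw [← hrb]; exact h2
            rw [sub_eq_iff_eq_add] at h4
            rw [hra] at h4
            rw [h4]; module
          exact smul_right_injective (EuclideanSpace ℝ (Fin 2)) (two_ne_zero (α := ℝ)) h3
        refine ⟨pa, ⟨pa, pb, hpa, hpb, hspan, hmid, ?_⟩, ?_⟩
        · rw [← hra, ← hrb, h2]
        · exact Or.inl ⟨hpa.1, hpapb ▸ hpb.1⟩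
      · -- the three points are pairwise distinct, hence not collinear, and since they lie
        -- on a common sphere around the origin, the circumcenter is 0 ∈ A ∩ B
        by_cases hcol : Collinear ℝ ({x, ra, rb} : Set (EuclideanSpace ℝ (Fin 2)))
        · exact absurd (collinear_sphere hcol hnra hnrb hrax h2).symm h1
        · refine ⟨0, ⟨pa, pb, hpa, hpb, ?_, ?_, ?_⟩, Or.inl ⟨hA0, hB0⟩⟩
          · rw [← hra, ← hrb, span_top_of_not_collinear hcol]; trivial
          · rw [← hra, zero_sub, zero_sub, norm_neg, norm_neg, hnra]
          · rw [← hra, ← hrb, zero_sub, zero_sub, norm_neg, norm_neg, hnrb]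

/-- For nonempty closed convex cones `A, B ⊆ ℝ²` and any initial point `x`,
the circumcentered-reflection method finds a point of `A ∩ B` in at most three steps. -/
theorem crm_cones_R2_three_steps
    (A B : Set (EuclideanSpace ℝ (Fin 2)))
    (hAne : A.Nonempty) (hAcl : IsClosed A) (hAcv : Convex ℝ A)
    (hAcone : ∀ l : ℝ, 0 ≤ l → ∀ y ∈ A, l • y ∈ A)
    (hBne : B.Nonempty) (hBcl : IsClosed B) (hBcv : Convex ℝ B)
    (hBcone : ∀ l : ℝ, 0 ≤ l → ∀ y ∈ B, l • y ∈ B)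
    (x : EuclideanSpace ℝ (Fin 2)) :
    ∃ x₁ x₂ x₃ : EuclideanSpace ℝ (Fin 2),
      IsCircumcenter A B x x₁ ∧ IsCircumcenter A B x₁ x₂ ∧ IsCircumcenter A B x₂ x₃ ∧
      (x ∈ A ∩ B ∨ x₁ ∈ A ∩ B ∨ x₂ ∈ A ∩ B ∨ x₃ ∈ A ∩ B) := by
  have hA0 : (0 : EuclideanSpace ℝ (Fin 2)) ∈ A := by
    obtain ⟨a, ha⟩ := hAne
    have := hAcone 0 le_rfl a ha
    simpa using this
  have hB0 : (0 : EuclideanSpace ℝ (Fin 2)) ∈ B := by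
    obtain ⟨b, hb⟩ := hBne
    have := hBcone 0 le_rfl b hb
    simpa using this
  have step := crm_step hAcl hAcv hAcone hBne hBcl hBcv hBcone hA0 hB0
  have halfhalf : (1/2 : ℝ) + 1/2 = 1 := by norm_num
  obtain ⟨x₁, hc1, h1⟩ := step x
  rcases h1 with h1 | ⟨hxA, hx1B⟩ | ⟨_, hx1A, b0, hb0, he0⟩
  · -- x₁ ∈ A ∩ B
    exact ⟨x₁, x₁, x₁, hc1, isCircumcenter_self h1.1 h1.2, isCircumcenter_self h1.1 h1.2,
      Or.inr (Or.inl h1)⟩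
  · -- x ∈ A and x₁ ∈ B
    obtain ⟨x₂, hc2, h2⟩ := step x₁
    rcases h2 with h2 | ⟨hx1A, hx2B⟩ | ⟨_, hx2A, b, hb, he⟩
    · exact ⟨x₁, x₂, x₂, hc1, hc2, isCircumcenter_self h2.1 h2.2, Or.inr (Or.inr (Or.inl h2))⟩
    · -- x₁ ∈ A ∩ B
      obtain ⟨x₃, hc3, _⟩ := step x₂
      exact ⟨x₁, x₂, x₃, hc1, hc2, hc3, Or.inr (Or.inl ⟨hx1A, hx1B⟩)⟩
    · -- x₂ ∈ A and x₂ is a midpoint of two points of B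
      have hx2B : x₂ ∈ B := by
        rw [he]; exact hBcv hx1B hb (by norm_num) (by norm_num) halfhalf
      exact ⟨x₁, x₂, x₂, hc1, hc2, isCircumcenter_self hx2A hx2B,
        Or.inr (Or.inr (Or.inl ⟨hx2A, hx2B⟩))⟩
  · -- x₁ ∈ A
    obtain ⟨x₂, hc2, h2⟩ := step x₁
    rcases h2 with h2 | ⟨_, hx2B⟩ | ⟨hx1A', _, _⟩
    · exact ⟨x₁, x₂, x₂, hc1, hc2, isCircumcenter_self h2.1 h2.2, Or.inr (Or.inr (Or.inl h2))⟩
    · -- x₂ ∈ B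
      obtain ⟨x₃, hc3, h3⟩ := step x₂
      rcases h3 with h3 | ⟨hx2A, hx3B⟩ | ⟨_, hx3A, b, hb, he⟩
      · exact ⟨x₁, x₂, x₃, hc1, hc2, hc3, Or.inr (Or.inr (Or.inr h3))⟩
      · exact ⟨x₁, x₂, x₃, hc1, hc2, hc3, Or.inr (Or.inr (Or.inl ⟨hx2A, hx2B⟩))⟩
      · have hx3B : x₃ ∈ B := by
          rw [he]; exact hBcv hx2B hb (by norm_num) (by norm_num) halfhalf
        exact ⟨x₁, x₂, x₃, hc1, hc2, hc3, Or.inr (Or.inr (Or.inr ⟨hx3A, hx3B⟩))⟩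
    · exact absurd hx1A hx1A'
end

section
/- Let H be a real Hilbert space and let A, B ⊆ H be nonempty closed convex sets. If R_A(x) ∈ B, then P_A(x) is a circumcenter of x with respect to (A, B), and it is the unique such circumcenter; in particular, the CRM step from such a point lands in A. -/
/-!
Since `R_A x ∈ B`, the projection onto `B` fixes it and `R_B (R_A x) = R_A x`, so the three
points collapse to `x` and `R_A x`. Projections are unique, so a circumcenter is exactly a point
on the line through `x` and `R_A x` equidistant from both, i.e. their midpoint, which is `P_A x`.
-/

open RealInnerProductSpace Pointwise

open AffineMap

section Projection

variable {E : Type*} [NormedAddCommGroup E] [InnerProductSpace ℝ E] {C : Set E} {x p q : E}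

theorem IsProj.unique (hp : IsProj C x p) (hq : IsProj C x q) : p = q := by
  have hsum : ⟪q - p, q - p⟫ = ⟪q - p, x - p⟫ + ⟪p - q, x - q⟫ := by
    rw [show p - q = -(q - p) by abel, show x - q = -(q - x) by abel, inner_neg_neg,
      ← inner_add_right]
    congr 1
    abel
  have hnonpos : ⟪q - p, q - p⟫ ≤ 0 := by
    rw [hsum]
    linarith [hp.2 q hq.1, hq.2 p hp.1]
  exact (sub_eq_zero.mp (real_inner_self_nonpos.mp hnonpos)).symm

theorem isProj_self_s5 (hx : x ∈ C) : IsProj C x x :=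
  ⟨hx, fun y _ => by simp⟩

end Projection

theorem eq_midpoint_iff_mem_affineSpan_pair_and_dist_eq {V P : Type*} [NormedAddCommGroup V]
    [NormedSpace ℝ V] [MetricSpace P] [NormedAddTorsor V P] {x r c : P} :
    c = midpoint ℝ x r ↔ c ∈ line[ℝ, x, r] ∧ dist c x = dist c r := by
  constructor
  · rintro rfl
    refine ⟨lineMap_mem_affineSpan_pair _ _ _, ?_⟩
    rw [dist_comm, dist_left_midpoint_eq_dist_right_midpoint, dist_comm]
  · rintro ⟨hc, hdist⟩
    obtain ⟨t, rfl⟩ := mem_affineSpan_pair_iff_exists_lineMap_eq.mp hc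
    rcases eq_or_ne x r with rfl | hxr
    · simp
    rw [dist_lineMap_left, dist_lineMap_right] at hdist
    have ht : t = ⅟2 := by
      have habs : |t| = |1 - t| := mul_right_cancel₀ (dist_ne_zero.mpr hxr) hdist
      rw [invOf_eq_inv]
      cases abs_eq_abs.mp habs <;> linarith
    rw [ht, midpoint]

theorem isCircumcenter_iff_of_reflection_mem {E : Type*} [NormedAddCommGroup E]
    [InnerProductSpace ℝ E] {A B : Set E} {x pa c : E} (hpa : IsProj A x pa)
    (hRA : (2 : ℝ) • pa - x ∈ B) :
    IsCircumcenter A B x c ↔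
      c ∈ line[ℝ, x, (2 : ℝ) • pa - x] ∧ ‖c - x‖ = ‖c - ((2 : ℝ) • pa - x)‖ := by
  have hpb : IsProj B ((2 : ℝ) • pa - x) ((2 : ℝ) • pa - x) := isProj_self_s5 hRA
  have hRBRA : (2 : ℝ) • ((2 : ℝ) • pa - x) - ((2 : ℝ) • pa - x) = (2 : ℝ) • pa - x := by
    module
  constructor
  · rintro ⟨pa', pb', hpa', hpb', hspan, hdist, -⟩
    obtain rfl := hpa'.unique hpa
    obtain rfl := hpb'.unique hpb
    rw [hRBRA, Set.pair_eq_singleton] at hspan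
    exact ⟨hspan, hdist⟩
  · rintro ⟨hspan, hdist⟩
    refine ⟨pa, _, hpa, hpb, ?_, hdist, ?_⟩
    · rwa [hRBRA, Set.pair_eq_singleton]
    · rwa [hRBRA]

theorem crm_step_reflection_in_B_general
    {H : Type*} [NormedAddCommGroup H] [InnerProductSpace ℝ H]
    (A B : Set H)
    (x pa : H) (hpa : IsProj A x pa) (hRA : (2 : ℝ) • pa - x ∈ B) :
    IsCircumcenter A B x pa ∧ (∀ c : H, IsCircumcenter A B x c → c = pa) ∧ pa ∈ A := by
  have hmid : midpoint ℝ x ((2 : ℝ) • pa - x) = pa := by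
    rw [midpoint_eq_smul_add, invOf_eq_inv]
    module
  have key (c : H) : IsCircumcenter A B x c ↔ c = pa := by
    rw [isCircumcenter_iff_of_reflection_mem hpa hRA, ← dist_eq_norm, ← dist_eq_norm,
      ← eq_midpoint_iff_mem_affineSpan_pair_and_dist_eq, hmid]
  exact ⟨(key pa).2 rfl, fun c => (key c).1, hpa.1⟩

/-- For nonempty closed convex sets `A, B` in a real Hilbert space, if
`pa = P_A x` and `R_A x = 2 pa - x ∈ B`, then `pa` is a circumcenter of `x` with respect to
`(A, B)`, it is the unique such circumcenter, and it lies in `A`. -/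
theorem crm_step_reflection_in_B
    {H : Type*} [NormedAddCommGroup H] [InnerProductSpace ℝ H] [CompleteSpace H]
    (A B : Set H) (hAne : A.Nonempty) (hAcl : IsClosed A) (hAcv : Convex ℝ A)
    (hBne : B.Nonempty) (hBcl : IsClosed B) (hBcv : Convex ℝ B)
    (x pa : H) (hpa : IsProj A x pa) (hRA : (2 : ℝ) • pa - x ∈ B) :
    IsCircumcenter A B x pa ∧ (∀ c : H, IsCircumcenter A B x c → c = pa) ∧ pa ∈ A :=
  crm_step_reflection_in_B_general A B x pa hpa hRA
end

section
/- Every nonempty polyhedral set S ⊆ ℝⁿ is locally conic at every point x ∈ S: there exists r > 0 such that, setting K := (S ∩ B_r(x)) − x (the translate of S ∩ B_r(x) by −x), one has K = B_r(0) ∩ (⋃_{λ ≥ 0} λK), where B_r(x) denotes the closed ball of radius r centered at x and λK = {λk : k ∈ K}. -/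
open RealInnerProductSpace Pointwise

/-- Every nonempty polyhedral set `S ⊆ ℝⁿ` (a finite intersection of closed
half-spaces `{x : ⟪a i, x⟫ ≤ b i}` with `a i ≠ 0`) is locally conic at every `x ∈ S`:
there is `r > 0` such that, with `K := (S ∩ B_r(x)) - x`, one has
`K = B_r(0) ∩ ⋃_{λ ≥ 0} λ K`. -/
theorem polyhedral_locally_conic {n : ℕ}
    (S : Set (EuclideanSpace ℝ (Fin n))) (hSne : S.Nonempty)
    (m : ℕ) (a : Fin m → EuclideanSpace ℝ (Fin n)) (b : Fin m → ℝ)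
    (ha : ∀ i, a i ≠ 0)
    (hS : S = ⋂ i, {x : EuclideanSpace ℝ (Fin n) | ⟪a i, x⟫ ≤ b i}) :
    ∀ x ∈ S, ∃ r > (0 : ℝ),
      (fun y => y - x) '' (S ∩ Metric.closedBall x r) =
        Metric.closedBall (0 : EuclideanSpace ℝ (Fin n)) r ∩
          ⋃ l ∈ {l : ℝ | 0 ≤ l},
            l • ((fun y => y - x) '' (S ∩ Metric.closedBall x r)) := by
  intro x hx
  have hxle : ∀ i, ⟪a i, x⟫ ≤ b i := by
    intro i
    rw [hS] at hx
    exact Set.mem_iInter.1 hx i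
  have hanorm : ∀ i, (0:ℝ) < ‖a i‖ := fun i => norm_pos_iff.2 (ha i)
  set T : Finset (Fin m) := Finset.univ.filter (fun i => ⟪a i, x⟫ < b i) with hT
  set F : Finset ℝ := insert (1:ℝ) (T.image fun i => (b i - ⟪a i, x⟫) / ‖a i‖) with hF
  have hFne : F.Nonempty := ⟨1, Finset.mem_insert_self _ _⟩
  set r : ℝ := F.min' hFne with hrdef
  have hr0 : 0 < r := by
    have hm := F.min'_mem hFne
    rcases Finset.mem_insert.1 hm with h | h
    · rw [hrdef, h]; norm_num
    · obtain ⟨i, hi, hieq⟩ := Finset.mem_image.1 h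
      have hi' : ⟪a i, x⟫ < b i := (Finset.mem_filter.1 hi).2
      rw [hrdef, ← hieq]
      exact div_pos (by linarith) (hanorm i)
  have hri : ∀ i, ⟪a i, x⟫ < b i → r ≤ (b i - ⟪a i, x⟫) / ‖a i‖ := by
    intro i hi
    apply F.min'_le
    exact Finset.mem_insert_of_mem
      (Finset.mem_image_of_mem _ (Finset.mem_filter.2 ⟨Finset.mem_univ i, hi⟩))
  refine ⟨r, hr0, ?_⟩
  set K := (fun y => y - x) '' (S ∩ Metric.closedBall x r) with hK
  -- forward: elements of K satisfy active cone inequalities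
  have hK1 : ∀ y ∈ K, ∀ i, b i ≤ ⟪a i, x⟫ → ⟪a i, y⟫ ≤ 0 := by
    intro y hy i hbi
    obtain ⟨z, ⟨hzS, _⟩, hzy⟩ := hy
    have hz : ⟪a i, z⟫ ≤ b i := by
      rw [hS] at hzS; exact Set.mem_iInter.1 hzS i
    have : ⟪a i, z - x⟫ = ⟪a i, z⟫ - ⟪a i, x⟫ := inner_sub_right _ _ _
    rw [← hzy, this]
    linarith
  -- norm bound: elements of K have norm ≤ r
  have hKnorm : ∀ y ∈ K, ‖y‖ ≤ r := by
    intro y hy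
    obtain ⟨z, ⟨_, hzb⟩, hzy⟩ := hy
    rw [Metric.mem_closedBall, dist_eq_norm] at hzb
    rw [← hzy]; exact hzb
  -- backward: norm ≤ r and cone inequalities imply membership in K
  have hK2 : ∀ y : EuclideanSpace ℝ (Fin n), ‖y‖ ≤ r →
      (∀ i, b i ≤ ⟪a i, x⟫ → ⟪a i, y⟫ ≤ 0) → y ∈ K := by
    intro y hyr hyc
    refine ⟨x + y, ⟨?_, ?_⟩, add_sub_cancel_left x y⟩
    · rw [hS]
      apply Set.mem_iInter.2
      intro i
      have hadd : ⟪a i, x + y⟫ = ⟪a i, x⟫ + ⟪a i, y⟫ := inner_add_right _ _ _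
      simp only [Set.mem_setOf_eq, hadd]
      rcases lt_or_ge (⟪a i, x⟫) (b i) with hi | hi
      · have h1 : ⟪a i, y⟫ ≤ ‖a i‖ * ‖y‖ := real_inner_le_norm _ _
        have h2 : ‖a i‖ * ‖y‖ ≤ ‖a i‖ * r :=
          mul_le_mul_of_nonneg_left hyr (le_of_lt (hanorm i))
        have h3 : ‖a i‖ * r ≤ ‖a i‖ * ((b i - ⟪a i, x⟫) / ‖a i‖) :=
          mul_le_mul_of_nonneg_left (hri i hi) (le_of_lt (hanorm i))
        have h4 : ‖a i‖ * ((b i - ⟪a i, x⟫) / ‖a i‖) = b i - ⟪a i, x⟫ :=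
          mul_div_cancel₀ _ (ne_of_gt (hanorm i))
        linarith
      · have := hyc i hi
        linarith [hxle i]
    · rw [Metric.mem_closedBall, dist_eq_norm]
      simpa using hyr
  ext y
  constructor
  · intro hy
    refine ⟨?_, ?_⟩
    · rw [Metric.mem_closedBall, dist_zero_right]
      exact hKnorm y hy
    · apply Set.mem_biUnion (show (1:ℝ) ∈ {l : ℝ | 0 ≤ l} by norm_num)
      rw [one_smul]; exact hy
  · rintro ⟨hyb, hyu⟩
    rw [Metric.mem_closedBall, dist_zero_right] at hyb
    simp only [Set.mem_iUnion, Set.mem_setOf_eq] at hyu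
    obtain ⟨l, hl, hyl⟩ := hyu
    obtain ⟨k, hk, hky⟩ := hyl
    apply hK2 y hyb
    intro i hbi
    rw [← hky]
    have : ⟪a i, l • k⟫ = l * ⟪a i, k⟫ := real_inner_smul_right _ _ _
    rw [this]
    exact mul_nonpos_of_nonneg_of_nonpos hl (hK1 k hk i hbi)
end

section
/- Let C ⊆ ℝ³ be a proper polyhedral cone, C' = C ∩ S², and let x ∈ S² with x ∉ C^⊖. Then p := P_C(x) is nonzero, and the point p' := p/‖p‖ is the geodesic projection of x onto C': arccos⟨x, p'⟩ = inf_{y ∈ C'} arccos⟨x, y⟩, and p' is the unique point of C' attaining this infimum. -/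
open RealInnerProductSpace Pointwise

/-- A proper polyhedral cone in `ℝ³`: the conic hull of finitely many vectors that is
closed, convex, pointed (`C ∩ (-C) = {0}`) and solid (nonempty interior). -/
def IsProperPolyhedralCone (C : Set (EuclideanSpace ℝ (Fin 3))) : Prop :=
  (∃ (m : ℕ) (v : Fin m → EuclideanSpace ℝ (Fin 3)),
      C = {x : EuclideanSpace ℝ (Fin 3) |
        ∃ α : Fin m → ℝ, (∀ i, 0 ≤ α i) ∧ x = ∑ i, α i • v i}) ∧
    IsClosed C ∧ Convex ℝ C ∧ C ∩ (-C) = {(0 : EuclideanSpace ℝ (Fin 3))} ∧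
    (interior C).Nonempty

theorem arccos_le_arccos' {a b : ℝ} (h : a ≤ b) : Real.arccos b ≤ Real.arccos a := by
  rw [Real.arccos_eq_pi_div_two_sub_arcsin, Real.arccos_eq_pi_div_two_sub_arcsin]
  have := Real.monotone_arcsin h
  linarith

/-- Let `C ⊆ ℝ³` be a proper polyhedral cone, `x ∈ S²` with `x` outside the
polar cone `C^⊖`, and `p = P_C x`. Then `p ≠ 0` and `p' = p/‖p‖` is the geodesic projection
of `x` onto `C' = C ∩ S²`: it lies in `C'`, it minimizes `y ↦ arccos ⟪x, y⟫` over `C'`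
(so `arccos ⟪x, p'⟫` equals the infimum of geodesic distances), and it is the unique point
of `C'` attaining this infimum. -/
theorem geodesic_projection_of_cone
    (C : Set (EuclideanSpace ℝ (Fin 3))) (hC : IsProperPolyhedralCone C)
    (x : EuclideanSpace ℝ (Fin 3)) (hx : x ∈ Metric.sphere (0 : EuclideanSpace ℝ (Fin 3)) 1)
    (hxpolar : ¬ ∀ y ∈ C, ⟪x, y⟫ ≤ 0)
    (p : EuclideanSpace ℝ (Fin 3)) (hp : IsProj C x p) :
    p ≠ 0 ∧
    ‖p‖⁻¹ • p ∈ C ∩ Metric.sphere (0 : EuclideanSpace ℝ (Fin 3)) 1 ∧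
    Real.arccos ⟪x, ‖p‖⁻¹ • p⟫ =
      sInf ((fun y => Real.arccos ⟪x, y⟫) ''
        (C ∩ Metric.sphere (0 : EuclideanSpace ℝ (Fin 3)) 1)) ∧
    (∀ y ∈ C ∩ Metric.sphere (0 : EuclideanSpace ℝ (Fin 3)) 1,
      Real.arccos ⟪x, ‖p‖⁻¹ • p⟫ ≤ Real.arccos ⟪x, y⟫) ∧
    (∀ y ∈ C ∩ Metric.sphere (0 : EuclideanSpace ℝ (Fin 3)) 1,
      Real.arccos ⟪x, y⟫ = Real.arccos ⟪x, ‖p‖⁻¹ • p⟫ → y = ‖p‖⁻¹ • p) := by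

  obtain ⟨⟨m, v, hrep⟩, -, -, -, -⟩ := hC
  have hx1 : ‖x‖ = 1 := by simpa using hx
  -- cone properties
  have hsmul : ∀ (t : ℝ), 0 ≤ t → ∀ y ∈ C, t • y ∈ C := by
    rw [hrep]
    rintro t ht y ⟨α, hα, rfl⟩
    exact ⟨fun i => t * α i, fun i => mul_nonneg ht (hα i), by
      rw [Finset.smul_sum]; simp [smul_smul]⟩
  have hzero : (0 : EuclideanSpace ℝ (Fin 3)) ∈ C := by
    rw [hrep]; exact ⟨fun _ => 0, fun _ => le_refl 0, by simp⟩
  obtain ⟨hpC, hproj⟩ := hp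
  -- orthogonality: ⟪p, x - p⟫ = 0
  have h2p : (2 : ℝ) • p ∈ C := hsmul 2 (by norm_num) p hpC
  have ha := hproj ((2 : ℝ) • p) h2p
  have hb := hproj 0 hzero
  have h0 : ⟪p, x - p⟫ = 0 := by
    have h2 : (2 : ℝ) • p - p = p := by
      rw [two_smul]; abel
    rw [h2] at ha
    rw [zero_sub, inner_neg_left] at hb
    linarith
  have hy : ∀ y ∈ C, ⟪y, x - p⟫ ≤ 0 := by
    intro y hyC
    have := hproj y hyC
    rw [inner_sub_left, h0] at this
    linarith
  -- p ≠ 0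
  have hpne : p ≠ 0 := by
    intro h
    apply hxpolar
    intro y hyC
    have := hy y hyC
    rw [h, sub_zero] at this
    rw [real_inner_comm]; exact this
  have hnp : 0 < ‖p‖ := norm_pos_iff.mpr hpne
  -- ⟪x, p'⟫ = ‖p‖
  have hpx : ⟪p, x⟫ = ‖p‖ ^ 2 := by
    rw [inner_sub_right] at h0
    rw [← real_inner_self_eq_norm_sq]
    linarith
  have hxp' : ⟪x, ‖p‖⁻¹ • p⟫ = ‖p‖ := by
    rw [real_inner_smul_right, real_inner_comm, hpx]
    field_simp [sq]
  -- p' ∈ C ∩ sphere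
  have hp'C : ‖p‖⁻¹ • p ∈ C := hsmul _ (inv_nonneg.mpr hnp.le) p hpC
  have hp'n : ‖(‖p‖⁻¹ • p)‖ = 1 := by
    rw [norm_smul, norm_inv, norm_norm]
    field_simp
  have hp'mem : ‖p‖⁻¹ • p ∈ C ∩ Metric.sphere (0 : EuclideanSpace ℝ (Fin 3)) 1 := by
    refine ⟨hp'C, ?_⟩
    simpa using hp'n
  -- key inequality on inner products
  have hkey : ∀ y ∈ C ∩ Metric.sphere (0 : EuclideanSpace ℝ (Fin 3)) 1, ⟪x, y⟫ ≤ ‖p‖ := by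
    rintro y ⟨hyC, hyS⟩
    have hyn : ‖y‖ = 1 := by simpa using hyS
    have h1 : ⟪x - p, y⟫ ≤ 0 := by rw [real_inner_comm]; exact hy y hyC
    have h2 : ⟪p, y⟫ ≤ ‖p‖ * ‖y‖ := real_inner_le_norm p y
    have h3 : ⟪x, y⟫ = ⟪x - p, y⟫ + ⟪p, y⟫ := by
      rw [← inner_add_left]; congr 1; abel
    rw [hyn, mul_one] at h2
    linarith
  -- equality case
  have heq : ∀ y ∈ C ∩ Metric.sphere (0 : EuclideanSpace ℝ (Fin 3)) 1,
      ⟪x, y⟫ = ‖p‖ → y = ‖p‖⁻¹ • p := by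
    rintro y ⟨hyC, hyS⟩ he
    have hyn : ‖y‖ = 1 := by simpa using hyS
    have h1 : ⟪x - p, y⟫ ≤ 0 := by rw [real_inner_comm]; exact hy y hyC
    have h3 : ⟪x, y⟫ = ⟪x - p, y⟫ + ⟪p, y⟫ := by
      rw [← inner_add_left]; congr 1; abel
    have h2 : ⟪p, y⟫ ≤ ‖p‖ * ‖y‖ := real_inner_le_norm p y
    rw [hyn, mul_one] at h2
    have h4 : ⟪p, y⟫ = ‖p‖ * ‖y‖ := by rw [hyn, mul_one]; linarith
    have h5 := (inner_eq_norm_mul_iff_real).mp h4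
    rw [hyn, one_smul] at h5
    have h6 : ‖p‖⁻¹ • p = ‖p‖⁻¹ • (‖p‖ • y) := by rw [← h5]
    rw [h6, smul_smul, inv_mul_cancel₀ hnp.ne', one_smul]
  -- bounds for arccos
  have hbd : ∀ y ∈ C ∩ Metric.sphere (0 : EuclideanSpace ℝ (Fin 3)) 1,
      -1 ≤ ⟪x, y⟫ ∧ ⟪x, y⟫ ≤ 1 := by
    rintro y ⟨-, hyS⟩
    have hyn : ‖y‖ = 1 := by simpa using hyS
    exact abs_le.mp (by simpa [hx1, hyn] using abs_real_inner_le_norm x y)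
  have hmono : ∀ y ∈ C ∩ Metric.sphere (0 : EuclideanSpace ℝ (Fin 3)) 1,
      Real.arccos ⟪x, ‖p‖⁻¹ • p⟫ ≤ Real.arccos ⟪x, y⟫ := by
    intro y hyM
    exact arccos_le_arccos' (by rw [hxp']; exact hkey y hyM)
  have huniq : ∀ y ∈ C ∩ Metric.sphere (0 : EuclideanSpace ℝ (Fin 3)) 1,
      Real.arccos ⟪x, y⟫ = Real.arccos ⟪x, ‖p‖⁻¹ • p⟫ → y = ‖p‖⁻¹ • p := by
    intro y hyM harc
    have hb1 := hbd y hyM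
    have hb2 := hbd _ hp'mem
    have : ⟪x, y⟫ = ⟪x, ‖p‖⁻¹ • p⟫ :=
      Real.strictAntiOn_arccos.injOn ⟨hb1.1, hb1.2⟩ ⟨hb2.1, hb2.2⟩ harc
    exact heq y hyM (by rw [this, hxp'])
  refine ⟨hpne, hp'mem, ?_, hmono, huniq⟩
  apply le_antisymm
  · refine le_csInf ⟨_, ⟨_, hp'mem, rfl⟩⟩ ?_
    rintro z ⟨y, hyM, rfl⟩
    exact hmono y hyM
  · apply csInf_le
    · exact ⟨0, by rintro z ⟨y, -, rfl⟩; exact Real.arccos_nonneg _⟩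
    · exact ⟨_, hp'mem, rfl⟩
end
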